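/- arXiv:cs/0603006 — 2 statements merged into one kernel-verified Lean document; each statement's English description precedes it below -/
import Mathlib

section
/- Let L be a language with a unary connective ¬ and binary connectives ∨ and ∧, F the set of all wffs of L, and ⟨F, 𝒱, ⊨⟩ a semantic structure satisfying (A3), (A1), (A0), and (A2). Let |~ be a relation on P(F) × F. Then |~ is a universe-codefinable pivotal-discriminative consequence relation if and only if |~ satisfies conditions (|~0), (|~6), (|~7), (|~8), (|~11), and (|~12). -/
/-- The set of models of a set of formulas `Γ`. -/
def modSet {F V : Type*} (sat : V → F → Prop) (Γ : Set F) : Set V :=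
  {v | ∀ α ∈ Γ, sat v α}

/-- The set of formulas satisfied in every valuation of `S`. -/
def thSet {F V : Type*} (sat : V → F → Prop) (S : Set V) : Set F :=
  {α | S ⊆ modSet sat {α}}

/-- `D`: the family of definable sets of valuations. -/
def defFam {F V : Type*} (sat : V → F → Prop) : Set (Set V) :=
  {S | ∃ Γ : Set F, modSet sat Γ = S}

/-- The basic consequence operator `C_⊢(Γ) = Th(Mod(Γ))`. -/
def cnsq {F V : Type*} (sat : V → F → Prop) (Γ : Set F) : Set F :=
  thSet sat (modSet sat Γ)

/-- `C_|~(Γ) = {α | Γ |~ α}`. -/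
def relC {F : Type*} (rel : Set F → F → Prop) (Γ : Set F) : Set F :=
  {α | rel Γ α}

/-- `𝐂`: the sets of valuations that do not satisfy both a formula and its negation. -/
def coFam {F V : Type*} (sat : V → F → Prop) (neg : F → F) : Set (Set V) :=
  {S | ∀ α, ¬(S ⊆ modSet sat {α} ∧ S ⊆ modSet sat {neg α})}

/-- `Γ` is consistent: for no `α` do we have both `Γ ⊢ α` and `Γ ⊢ ¬α`. -/
def isConsistent {F V : Type*} (sat : V → F → Prop) (neg : F → F) (Γ : Set F) : Prop :=
  ∀ α, ¬(modSet sat Γ ⊆ modSet sat {α} ∧ modSet sat Γ ⊆ modSet sat {neg α})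

/-- One step of the inductive construction of the sets `H_i(Γ)`:
`hStep … Γ B = {¬β : β ∈ C_⊢(B) \ C_|~(Γ) and ¬β ∉ C_⊢(B)}`. -/
def hStep {F V : Type*} (sat : V → F → Prop) (neg : F → F)
    (rel : Set F → F → Prop) (Γ B : Set F) : Set F :=
  {x | ∃ β, x = neg β ∧ β ∈ cnsq sat B ∧ β ∉ relC rel Γ ∧ neg β ∉ cnsq sat B}

/-- `hPrev … Γ n = Γ ∪ C_|~(Γ) ∪ H_1(Γ) ∪ … ∪ H_n(Γ)`. -/
def hPrev {F V : Type*} (sat : V → F → Prop) (neg : F → F)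
    (rel : Set F → F → Prop) (Γ : Set F) : ℕ → Set F
  | 0 => Γ ∪ relC rel Γ
  | n + 1 => hPrev sat neg rel Γ n ∪ hStep sat neg rel Γ (hPrev sat neg rel Γ n)

/-- `H(Γ) = ⋃_{i ≥ 1} H_i(Γ)`, where `H_{n+1}(Γ) = hStep … Γ (hPrev … Γ n)`. -/
def hSet {F V : Type*} (sat : V → F → Prop) (neg : F → F)
    (rel : Set F → F → Prop) (Γ : Set F) : Set F :=
  ⋃ n : ℕ, hStep sat neg rel Γ (hPrev sat neg rel Γ n)

/-- Assumption `(A2)`. -/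
def assumpA2 {F V : Type*} (sat : V → F → Prop) (neg : F → F) : Prop :=
  ∀ (Γ : Set F) (α : F), α ∉ cnsq sat Γ → neg α ∉ cnsq sat Γ →
    ¬(modSet sat Γ ∩ modSet sat {α} ⊆ modSet sat {neg α})

/-- Assumption `(A3)`. -/
def assumpA3 {F V : Type*} (sat : V → F → Prop) (neg : F → F)
    (disj conj : F → F → F) : Prop :=
  ∀ α β : F,
    modSet sat {disj α β} = modSet sat {α} ∪ modSet sat {β} ∧
    modSet sat {conj α β} = modSet sat {α} ∩ modSet sat {β} ∧
    modSet sat {neg (neg α)} = modSet sat {α} ∧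
    modSet sat {neg (disj α β)} = modSet sat {conj (neg α) (neg β)} ∧
    modSet sat {neg (conj α β)} = modSet sat {disj (neg α) (neg β)}

/-- Condition `(|~0)`. -/
def cond0 {F V : Type*} (sat : V → F → Prop) (rel : Set F → F → Prop) : Prop :=
  ∀ Γ Δ : Set F, cnsq sat Γ = cnsq sat Δ → relC rel Γ = relC rel Δ

/-- Condition `(|~6)`. -/
def cond6 {F V : Type*} (sat : V → F → Prop) (neg : F → F)
    (rel : Set F → F → Prop) : Prop :=
  ∀ (Γ : Set F) (α β : F),
    β ∈ cnsq sat (Γ ∪ relC rel Γ) → β ∉ relC rel Γ →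
    neg α ∈ cnsq sat (Γ ∪ relC rel Γ ∪ {neg β}) → α ∉ relC rel Γ

/-- Condition `(|~7)`. -/
def cond7 {F V : Type*} (sat : V → F → Prop) (neg : F → F) (disj : F → F → F)
    (rel : Set F → F → Prop) : Prop :=
  ∀ (Γ : Set F) (α β : F),
    α ∈ cnsq sat (Γ ∪ relC rel Γ) → α ∉ relC rel Γ →
    β ∈ cnsq sat (Γ ∪ relC rel Γ ∪ {neg α}) → β ∉ relC rel Γ →
    disj α β ∉ relC rel Γ

/-- Condition `(|~8)`. -/
def cond8 {F V : Type*} (sat : V → F → Prop) (neg : F → F)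
    (rel : Set F → F → Prop) : Prop :=
  ∀ (Γ : Set F) (α : F), α ∈ relC rel Γ → neg α ∉ cnsq sat (Γ ∪ relC rel Γ)

/-- Condition `(|~9)`. -/
def cond9 {F V : Type*} (sat : V → F → Prop) (neg : F → F)
    (rel : Set F → F → Prop) : Prop :=
  ∀ Γ Δ : Set F, relC rel Γ ∪ hSet sat neg rel Γ ⊆
    cnsq sat (Δ ∪ relC rel Δ ∪ hSet sat neg rel Δ ∪ Γ)

/-- Condition `(|~10)`. -/
def cond10 {F V : Type*} (sat : V → F → Prop) (neg : F → F)
    (rel : Set F → F → Prop) : Prop :=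
  ∀ Γ : Set F, isConsistent sat neg Γ →
    isConsistent sat neg (relC rel Γ) ∧ Γ ⊆ relC rel Γ ∧
      cnsq sat (relC rel Γ) = relC rel Γ

/-- Condition `(|~11)`. -/
def cond11 {F V : Type*} (sat : V → F → Prop) (neg : F → F)
    (rel : Set F → F → Prop) : Prop :=
  ∀ Γ : Set F, cnsq sat (Γ ∪ relC rel Γ ∪ hSet sat neg rel Γ) =
    thSet sat {v ∈ modSet sat Γ | ∀ Δ : Set F, v ∈ modSet sat Δ →
      v ∈ modSet sat (relC rel Δ ∪ hSet sat neg rel Δ)}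

/-- Condition `(|~12)`. -/
def cond12 {F V : Type*} (sat : V → F → Prop) (neg : F → F)
    (rel : Set F → F → Prop) : Prop :=
  Set.univ \ {v : V | ∀ Δ : Set F, v ∈ modSet sat Δ →
    v ∈ modSet sat (relC rel Δ ∪ hSet sat neg rel Δ)} ∈ defFam sat

/-!
A strongly coherent choice function on definable sets has the form `μ A = A ∩ M` with
`M = μ 𝒱`, so `Γ |~ α` says that `α` holds on `Mod Γ ∩ M` and `¬α` does not. For such a
relation, each `H`-step adds exactly the negations `¬β` of formulas `β` that hold on
`Mod Γ ∩ M` without being `|~`-consequences, so `Γ ∪ C_|~(Γ) ∪ H(Γ)` holds on `Mod Γ ∩ M`;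
conversely, by finiteness some single `β` is strongest on `Mod Γ ∩ M`, and `(A2)` forces it
to follow from `Γ ∪ C_|~(Γ) ∪ H(Γ)`. Hence this set axiomatises `Mod Γ ∩ M`, which
identifies `M` with the set `N` of valuations in `(|~11)` and `(|~12)` (for `N ⊆ M`, apply
this to `Θ` with `Mod Θ = 𝒱 \ M`, where everything follows, and use `(A0)`); `(|~6)`–`(|~8)`
follow directly.

Conversely, `(|~6)`–`(|~8)` force every stage of the `H`-construction to cut
`Mod (Γ ∪ C_|~(Γ))` by the negation of at most one formula `δ` with `δ ∉ C_|~(Γ)`: cutting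
by `¬δ₁` and then `¬δ₂` is cutting by `¬(δ₁ ∨ δ₂)`, which `(|~7)` keeps outside
`C_|~(Γ)`. So no `¬α` with `Γ |~ α` follows, and `Γ |~ α` iff `α` but not `¬α` follows
from `Γ ∪ C_|~(Γ) ∪ H(Γ)`; by `(|~11)` this is the defining condition for `μ A = A ∩ N`.
-/

section

variable {F V : Type*}

def hClosure (sat : V → F → Prop) (neg : F → F) (rel : Set F → F → Prop) (Γ : Set F) :
    Set F :=
  Γ ∪ relC rel Γ ∪ hSet sat neg rel Γ

def pivotSet (sat : V → F → Prop) (neg : F → F) (rel : Set F → F → Prop) : Set V :=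
  {v | ∀ Δ : Set F, v ∈ modSet sat Δ → v ∈ modSet sat (relC rel Δ ∪ hSet sat neg rel Δ)}

def PivotalBy (sat : V → F → Prop) (neg : F → F) (M : Set V) (rel : Set F → F → Prop) :
    Prop :=
  ∀ Γ α, rel Γ α ↔
    modSet sat Γ ∩ M ⊆ modSet sat {α} ∧ ¬ modSet sat Γ ∩ M ⊆ modSet sat {neg α}

def IsNegCut (sat : V → F → Prop) (neg : F → F) (rel : Set F → F → Prop) (Γ : Set F)
    (X : Set V) : Prop :=
  X = modSet sat (Γ ∪ relC rel Γ) ∨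
    ∃ δ ∈ cnsq sat (Γ ∪ relC rel Γ), δ ∉ relC rel Γ ∧
      X = modSet sat (Γ ∪ relC rel Γ ∪ {neg δ})

variable {sat : V → F → Prop} {neg : F → F} {disj conj : F → F → F}
  {rel : Set F → F → Prop}

lemma mem_modSet_singleton {α : F} {v : V} : v ∈ modSet sat {α} ↔ sat v α := by
  simp [modSet]

lemma modSet_union (Γ Δ : Set F) :
    modSet sat (Γ ∪ Δ) = modSet sat Γ ∩ modSet sat Δ := by
  ext v; simp [modSet, or_imp, forall_and]

lemma modSet_iUnion {ι : Type*} (Γ : ι → Set F) :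
    modSet sat (⋃ i, Γ i) = ⋂ i, modSet sat (Γ i) := by
  ext v; simp only [modSet, Set.mem_iUnion, Set.mem_iInter, Set.mem_ofPred_eq]; grind

lemma modSet_empty : modSet sat (∅ : Set F) = Set.univ := by
  simp [modSet]

lemma subset_modSet_iff {S : Set V} {Γ : Set F} : S ⊆ modSet sat Γ ↔ Γ ⊆ thSet sat S :=
  ⟨fun h γ hγ _ hv => mem_modSet_singleton.2 (h hv γ hγ),
    fun h _ hv _ hγ => mem_modSet_singleton.1 (h hγ hv)⟩

lemma modSet_anti {Γ Δ : Set F} (h : Γ ⊆ Δ) : modSet sat Δ ⊆ modSet sat Γ :=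
  fun _ hv α hα => hv α (h hα)

lemma mem_cnsq {Γ : Set F} {α : F} : α ∈ cnsq sat Γ ↔ modSet sat Γ ⊆ modSet sat {α} :=
  Iff.rfl

lemma subset_cnsq (Γ : Set F) : Γ ⊆ cnsq sat Γ :=
  subset_modSet_iff.1 subset_rfl

lemma modSet_cnsq (Γ : Set F) : modSet sat (cnsq sat Γ) = modSet sat Γ :=
  (modSet_anti (subset_cnsq Γ)).antisymm (subset_modSet_iff.2 subset_rfl)

lemma modSet_eq_of_cnsq_eq {Γ Δ : Set F} (h : cnsq sat Γ = cnsq sat Δ) :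
    modSet sat Γ = modSet sat Δ := by
  rw [← modSet_cnsq Γ, h, modSet_cnsq]

lemma univ_mem_defFam : (Set.univ : Set V) ∈ defFam sat :=
  ⟨∅, modSet_empty⟩

lemma thSet_empty : thSet sat (∅ : Set V) = Set.univ :=
  Set.eq_univ_of_forall fun _ => Set.empty_subset _

lemma modSet_neg_neg (hA3 : assumpA3 sat neg disj conj) (α : F) :
    modSet sat {neg (neg α)} = modSet sat {α} :=
  (hA3 α α).2.2.1

lemma modSet_neg_disj (hA3 : assumpA3 sat neg disj conj) (α β : F) :
    modSet sat {neg (disj α β)} = modSet sat {neg α} ∩ modSet sat {neg β} := by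
  rw [(hA3 α β).2.2.2.1, (hA3 (neg α) (neg β)).2.1]

lemma hStep_congr {Γ B B' : Set F} (h : cnsq sat B = cnsq sat B') :
    hStep sat neg rel Γ B = hStep sat neg rel Γ B' := by
  unfold hStep; rw [h]

lemma modSet_hStep (Γ B : Set F) :
    modSet sat (hStep sat neg rel Γ B) =
      ⋂ β ∈ {β | β ∈ cnsq sat B ∧ β ∉ relC rel Γ ∧ neg β ∉ cnsq sat B},
        modSet sat {neg β} := by
  ext v
  simp only [modSet, hStep, Set.mem_ofPred_eq, Set.mem_iInter, Set.mem_singleton_iff,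
    forall_eq]
  grind

lemma hPrev_succ (Γ : Set F) (n : ℕ) :
    hPrev sat neg rel Γ (n + 1) =
      hPrev sat neg rel Γ n ∪ hStep sat neg rel Γ (hPrev sat neg rel Γ n) :=
  rfl

lemma hPrev_mono (Γ : Set F) : Monotone (hPrev sat neg rel Γ) :=
  monotone_nat_of_le_succ fun _ => Set.subset_union_left

lemma hClosure_eq_iUnion_hPrev (Γ : Set F) :
    hClosure sat neg rel Γ = ⋃ n, hPrev sat neg rel Γ n := by
  apply subset_antisymm
  · refine Set.union_subset (Set.subset_iUnion (hPrev sat neg rel Γ) 0) ?_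
    refine Set.iUnion_subset fun n => ?_
    exact fun x hx => Set.mem_iUnion.2 ⟨n + 1, Or.inr hx⟩
  · refine Set.iUnion_subset fun n => ?_
    induction n with
    | zero => exact Set.subset_union_left
    | succ n ih => exact Set.union_subset ih fun x hx => Or.inr (Set.mem_iUnion.2 ⟨n, hx⟩)

lemma modSet_hClosure (Γ : Set F) :
    modSet sat (hClosure sat neg rel Γ) =
      modSet sat Γ ∩ modSet sat (relC rel Γ ∪ hSet sat neg rel Γ) := by
  rw [hClosure, Set.union_assoc, modSet_union]

lemma exists_modSet_hClosure_eq_hPrev [Finite V] (Γ : Set F) :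
    ∃ K, modSet sat (hClosure sat neg rel Γ) = modSet sat (hPrev sat neg rel Γ K) := by
  have hanti : Antitone fun n => modSet sat (hPrev sat neg rel Γ n) :=
    fun _ _ h => modSet_anti (hPrev_mono Γ h)
  obtain ⟨K, hK⟩ := WellFoundedLT.antitone_chain_condition hanti
  refine ⟨K, ?_⟩
  rw [hClosure_eq_iUnion_hPrev, modSet_iUnion]
  refine (Set.iInter_subset _ K).antisymm (Set.subset_iInter fun n => ?_)
  rcases le_total K n with h | h
  · exact (hK n h).le
  · exact hanti h

lemma hStep_hClosure_subset [Finite V] (Γ : Set F) :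
    hStep sat neg rel Γ (hClosure sat neg rel Γ) ⊆ hClosure sat neg rel Γ := by
  obtain ⟨K, hK⟩ := exists_modSet_hClosure_eq_hPrev (sat := sat) (neg := neg) (rel := rel) Γ
  rw [hStep_congr (congrArg (thSet sat) hK), hClosure_eq_iUnion_hPrev]
  exact fun x hx => Set.mem_iUnion.2 ⟨K + 1, Or.inr hx⟩

lemma neg_mem_cnsq_hClosure [Finite V] {Γ : Set F} {γ : F}
    (h₁ : γ ∈ cnsq sat (hClosure sat neg rel Γ)) (h₂ : γ ∉ relC rel Γ) :
    neg γ ∈ cnsq sat (hClosure sat neg rel Γ) := by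
  by_contra h₃
  exact h₃ (subset_cnsq _ (hStep_hClosure_subset Γ ⟨γ, rfl, h₁, h₂, h₃⟩))

lemma exists_modSet_minimal_mem_thSet [Finite V]
    (hconj : ∀ β γ : F, modSet sat {conj β γ} = modSet sat {β} ∩ modSet sat {γ})
    {S : Set V} {β₀ : F} (hβ₀ : β₀ ∈ thSet sat S) :
    ∃ β ∈ thSet sat S, ∀ γ ∈ thSet sat S, modSet sat {β} ⊆ modSet sat {γ} := by
  obtain ⟨-, ⟨β, hβ, rfl⟩, hmin⟩ := exists_minimal_of_wellFoundedLT
    (fun X => ∃ β ∈ thSet sat S, modSet sat {β} = X) ⟨_, β₀, hβ₀, rfl⟩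
  refine ⟨β, hβ, fun γ hγ => ?_⟩
  have hc : conj β γ ∈ thSet sat S := by
    change S ⊆ _
    rw [hconj]
    exact Set.subset_inter hβ hγ
  have hle := hmin ⟨conj β γ, hc, rfl⟩ (by rw [hconj]; exact Set.inter_subset_left)
  rw [hconj] at hle
  exact hle.trans Set.inter_subset_right

lemma eq_inter_of_stronglyCoherent {μ : Set V → Set V}
    (hsub : ∀ A ∈ defFam sat, μ A ⊆ A)
    (hSC : ∀ A ∈ defFam sat, ∀ B ∈ defFam sat, μ B ∩ A ⊆ μ A)
    {A : Set V} (hA : A ∈ defFam sat) : μ A = A ∩ μ Set.univ :=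
  (Set.subset_inter (hsub A hA) fun _ hx => hSC _ univ_mem_defFam A hA ⟨hx, trivial⟩).antisymm
    fun _ hx => hSC A hA _ univ_mem_defFam ⟨hx.2, hx.1⟩

namespace PivotalBy

variable {M : Set V}

lemma subset_neg_of_not_rel (hM : PivotalBy sat neg M rel) {Γ : Set F} {β : F}
    (hβ : modSet sat Γ ∩ M ⊆ modSet sat {β}) (hr : ¬ rel Γ β) :
    modSet sat Γ ∩ M ⊆ modSet sat {neg β} := by
  by_contra h
  exact hr ((hM Γ β).2 ⟨hβ, h⟩)

lemma inter_subset_modSet_base (hM : PivotalBy sat neg M rel) (Γ : Set F) :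
    modSet sat Γ ∩ M ⊆ modSet sat (Γ ∪ relC rel Γ) := by
  rw [modSet_union]
  exact Set.subset_inter Set.inter_subset_left
    (subset_modSet_iff.2 fun α hα => ((hM Γ α).1 hα).1)

lemma inter_subset_modSet_hStep (hM : PivotalBy sat neg M rel) {Γ B : Set F}
    (hB : modSet sat Γ ∩ M ⊆ modSet sat B) :
    modSet sat Γ ∩ M ⊆ modSet sat (hStep sat neg rel Γ B) := by
  rw [modSet_hStep]
  exact Set.subset_iInter₂ fun β ⟨hβ, hr, _⟩ => hM.subset_neg_of_not_rel (hB.trans hβ) hr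

lemma inter_subset_modSet_hClosure (hM : PivotalBy sat neg M rel) (Γ : Set F) :
    modSet sat Γ ∩ M ⊆ modSet sat (hClosure sat neg rel Γ) := by
  rw [hClosure_eq_iUnion_hPrev, modSet_iUnion]
  refine Set.subset_iInter fun n => ?_
  induction n with
  | zero => exact hM.inter_subset_modSet_base Γ
  | succ n ih =>
    rw [hPrev_succ, modSet_union]
    exact Set.subset_inter ih (hM.inter_subset_modSet_hStep ih)

lemma inter_subset_modSet_insert_neg (hM : PivotalBy sat neg M rel) {Γ : Set F} {β : F}
    (hβ : β ∈ cnsq sat (Γ ∪ relC rel Γ)) (hr : β ∉ relC rel Γ) :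
    modSet sat Γ ∩ M ⊆ modSet sat (Γ ∪ relC rel Γ ∪ {neg β}) := by
  have hbase := hM.inter_subset_modSet_base Γ
  rw [modSet_union]
  exact Set.subset_inter hbase (hM.subset_neg_of_not_rel (hbase.trans hβ) hr)

lemma cond0 (hM : PivotalBy sat neg M rel) : cond0 sat rel := by
  intro Γ Δ h
  ext α
  simp only [relC, Set.mem_ofPred_eq, hM Γ α, hM Δ α, modSet_eq_of_cnsq_eq h]

lemma cond6 (hM : PivotalBy sat neg M rel) : cond6 sat neg rel :=
  fun _ _ _ hβ hr hα hα' =>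
    ((hM _ _).1 hα').2 ((hM.inter_subset_modSet_insert_neg hβ hr).trans hα)

lemma cond7 (hA3 : assumpA3 sat neg disj conj) (hM : PivotalBy sat neg M rel) :
    cond7 sat neg disj rel := by
  intro Γ α β hα hrα hβ hrβ hd
  have hext := hM.inter_subset_modSet_insert_neg hα hrα
  have hnα : modSet sat Γ ∩ M ⊆ modSet sat {neg α} :=
    hext.trans (modSet_anti Set.subset_union_right)
  have hnβ := hM.subset_neg_of_not_rel (hext.trans hβ) hrβ
  exact ((hM _ _).1 hd).2 (by rw [modSet_neg_disj hA3]; exact Set.subset_inter hnα hnβ)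

lemma cond8 (hM : PivotalBy sat neg M rel) : cond8 sat neg rel :=
  fun Γ _ hα hnα => ((hM _ _).1 hα).2 ((hM.inter_subset_modSet_base Γ).trans hnα)

lemma thSet_inter_subset_cnsq_hClosure [Finite V] (hA2 : assumpA2 sat neg)
    (hA3 : assumpA3 sat neg disj conj) (hM : PivotalBy sat neg M rel) (Γ : Set F) :
    thSet sat (modSet sat Γ ∩ M) ⊆ cnsq sat (hClosure sat neg rel Γ) := by
  intro β₀ hβ₀
  obtain ⟨β, hβ, hmin⟩ := exists_modSet_minimal_mem_thSet (fun β γ => (hA3 β γ).2.1) hβ₀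
  suffices hβΩ : β ∈ cnsq sat (hClosure sat neg rel Γ) from hβΩ.trans (hmin β₀ hβ₀)
  by_contra hβΩ
  have hr : β ∉ relC rel Γ := fun h => hβΩ (subset_cnsq _ (Or.inl (Or.inr h)))
  have hnβ : modSet sat {β} ⊆ modSet sat {neg β} := hmin _ (hM.subset_neg_of_not_rel hβ hr)
  have hnr : neg β ∉ relC rel Γ := fun h =>
    ((hM Γ _).1 h).2 (by rw [modSet_neg_neg hA3]; exact hβ)
  have hnβΩ : neg β ∉ cnsq sat (hClosure sat neg rel Γ) := fun h => by
    have hnn := neg_mem_cnsq_hClosure h hnr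
    rw [mem_cnsq, modSet_neg_neg hA3] at hnn
    exact hβΩ hnn
  exact hA2 _ β hβΩ hnβΩ (Set.inter_subset_right.trans hnβ)

lemma cnsq_hClosure [Finite V] (hA2 : assumpA2 sat neg) (hA3 : assumpA3 sat neg disj conj)
    (hM : PivotalBy sat neg M rel) (Γ : Set F) :
    cnsq sat (hClosure sat neg rel Γ) = thSet sat (modSet sat Γ ∩ M) :=
  Set.Subset.antisymm (fun _ hα => (hM.inter_subset_modSet_hClosure Γ).trans hα)
    (hM.thSet_inter_subset_cnsq_hClosure hA2 hA3 Γ)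

lemma subset_pivotSet (hM : PivotalBy sat neg M rel) : M ⊆ pivotSet sat neg rel :=
  fun v hv Δ hvΔ => by
    have hvΩ := hM.inter_subset_modSet_hClosure Δ ⟨hvΔ, hv⟩
    rw [modSet_hClosure] at hvΩ
    exact hvΩ.2

lemma pivotSet_subset [Finite V] (hA0 : modSet sat (Set.univ : Set F) = ∅)
    (hA2 : assumpA2 sat neg) (hA3 : assumpA3 sat neg disj conj)
    (hM : PivotalBy sat neg M rel) (hUC : Set.univ \ M ∈ defFam sat) :
    pivotSet sat neg rel ⊆ M := by
  obtain ⟨Θ, hΘ⟩ := hUC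
  intro v hv
  by_contra hvM
  have hvΘ : v ∈ modSet sat Θ := hΘ ▸ ⟨trivial, hvM⟩
  have hvΩ : v ∈ modSet sat (hClosure sat neg rel Θ) := by
    rw [modSet_hClosure]
    exact ⟨hvΘ, hv Θ hvΘ⟩
  have hΩ : modSet sat (hClosure sat neg rel Θ) = ∅ := by
    rw [← modSet_cnsq, hM.cnsq_hClosure hA2 hA3, hΘ, Set.sdiff_inter_self, thSet_empty, hA0]
  rwa [hΩ] at hvΩ

end PivotalBy

lemma cond11_iff : cond11 sat neg rel ↔ ∀ Γ : Set F,
    cnsq sat (hClosure sat neg rel Γ) = thSet sat (modSet sat Γ ∩ pivotSet sat neg rel) :=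
  Iff.rfl

lemma cond12_iff : cond12 sat neg rel ↔ Set.univ \ pivotSet sat neg rel ∈ defFam sat :=
  Iff.rfl

lemma inter_biInter_of_inter_closed [Finite V] {ι : Type*} {P : Set V → Prop} {s : Set ι}
    {f : ι → Set V} (hP : ∀ Y, ∀ i ∈ s, P Y → P (Y ∩ f i)) {X : Set V} (hX : P X) :
    P (X ∩ ⋂ i ∈ s, f i) := by
  obtain ⟨Y, hYX, ⟨hY, hYsub⟩, hmin⟩ := exists_minimal_le_of_wellFoundedLT
    (fun Y => P Y ∧ X ∩ ⋂ i ∈ s, f i ⊆ Y) X ⟨hX, Set.inter_subset_left⟩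
  -- `Y ∩ f i` is again such a set, so minimality puts `Y` inside every `f i`.
  suffices hYeq : Y = X ∩ ⋂ i ∈ s, f i from hYeq ▸ hY
  refine (Set.subset_inter hYX (Set.subset_iInter₂ fun i hi => ?_)).antisymm hYsub
  have hfi : X ∩ ⋂ i ∈ s, f i ⊆ f i :=
    Set.inter_subset_right.trans (Set.biInter_subset_of_mem hi)
  exact (hmin ⟨hP Y i hi hY, Set.subset_inter hYsub hfi⟩ Set.inter_subset_left).trans
    Set.inter_subset_right

lemma IsNegCut.inter_modSet_neg (hA3 : assumpA3 sat neg disj conj)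
    (h7 : cond7 sat neg disj rel) {Γ : Set F} {X : Set V} (hX : IsNegCut sat neg rel Γ X)
    {a : F} (ha : X ⊆ modSet sat {a}) (hr : a ∉ relC rel Γ) :
    IsNegCut sat neg rel Γ (X ∩ modSet sat {neg a}) := by
  right
  rcases hX with rfl | ⟨δ, hδ, hrδ, rfl⟩
  · exact ⟨a, ha, hr, (modSet_union _ _).symm⟩
  · refine ⟨disj δ a, ?_, h7 Γ δ a hδ hrδ ha hr, ?_⟩
    · rw [mem_cnsq, (hA3 δ a).1]
      exact hδ.trans Set.subset_union_left
    · simp only [modSet_union, modSet_neg_disj hA3, Set.inter_assoc]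

lemma IsNegCut.not_subset_modSet_neg (h6 : cond6 sat neg rel) (h8 : cond8 sat neg rel)
    {Γ : Set F} {X : Set V} (hX : IsNegCut sat neg rel Γ X) {α : F} (hα : rel Γ α) :
    ¬ X ⊆ modSet sat {neg α} := by
  rcases hX with rfl | ⟨δ, hδ, hrδ, rfl⟩
  · exact h8 Γ α hα
  · exact fun h => h6 Γ α δ hδ hrδ h hα

lemma isNegCut_modSet_hPrev [Finite V] (hA3 : assumpA3 sat neg disj conj)
    (h7 : cond7 sat neg disj rel) (Γ : Set F) (n : ℕ) :
    IsNegCut sat neg rel Γ (modSet sat (hPrev sat neg rel Γ n)) := by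
  induction n with
  | zero => exact Or.inl rfl
  | succ n ih =>
    rw [hPrev_succ, modSet_union, modSet_hStep]
    refine (inter_biInter_of_inter_closed (P := fun Y =>
      IsNegCut sat neg rel Γ Y ∧ Y ⊆ modSet sat (hPrev sat neg rel Γ n)) ?_ ⟨ih, subset_rfl⟩).1
    rintro Y β ⟨hβ, hr, -⟩ ⟨hY, hYsub⟩
    exact ⟨hY.inter_modSet_neg hA3 h7 (hYsub.trans hβ) hr, Set.inter_subset_left.trans hYsub⟩

lemma rel_iff_mem_cnsq_hClosure [Finite V] (hA3 : assumpA3 sat neg disj conj)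
    (h6 : cond6 sat neg rel) (h7 : cond7 sat neg disj rel) (h8 : cond8 sat neg rel)
    (Γ : Set F) (α : F) :
    rel Γ α ↔ α ∈ cnsq sat (hClosure sat neg rel Γ) ∧
      neg α ∉ cnsq sat (hClosure sat neg rel Γ) := by
  refine ⟨fun hα => ⟨subset_cnsq _ (Or.inl (Or.inr hα)), ?_⟩, fun ⟨hα, hnα⟩ => ?_⟩
  · obtain ⟨K, hK⟩ := exists_modSet_hClosure_eq_hPrev (sat := sat) (neg := neg) (rel := rel) Γ
    rw [mem_cnsq, hK]
    exact (isNegCut_modSet_hPrev hA3 h7 Γ K).not_subset_modSet_neg h6 h8 hα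
  · by_contra hr
    exact hnα (neg_mem_cnsq_hClosure hα hr)

end

/-- Under `(A3)`, `(A1)`, `(A0)`, and `(A2)`, `|~` is a
universe-codefinable pivotal-discriminative consequence relation iff it satisfies
`(|~0)`, `(|~6)`, `(|~7)`, `(|~8)`, `(|~11)`, and `(|~12)`. -/
theorem stmt15 {F V : Type*} (neg : F → F) (disj conj : F → F → F)
    (sat : V → F → Prop)
    (hA3 : assumpA3 sat neg disj conj) (hA1 : Finite V)
    (hA0 : modSet sat (Set.univ : Set F) = ∅)
    (hA2 : assumpA2 sat neg)
    (rel : Set F → F → Prop) :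
    (∃ μ : Set V → Set V,
        (∀ A ∈ defFam sat, μ A ⊆ A) ∧
        (∀ A ∈ defFam sat, ∀ B ∈ defFam sat, μ B ∩ A ⊆ μ A) ∧
        Set.univ \ μ Set.univ ∈ defFam sat ∧
        (∀ (Γ : Set F) (α : F), rel Γ α ↔
          (μ (modSet sat Γ) ⊆ modSet sat {α} ∧
            ¬ μ (modSet sat Γ) ⊆ modSet sat {neg α}))) ↔
      (cond0 sat rel ∧ cond6 sat neg rel ∧ cond7 sat neg disj rel ∧
        cond8 sat neg rel ∧ cond11 sat neg rel ∧ cond12 sat neg rel) := by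
  constructor
  · rintro ⟨μ, hsub, hSC, hUC, hrel⟩
    have hM : PivotalBy sat neg (μ Set.univ) rel := fun Γ α => by
      rw [hrel, eq_inter_of_stronglyCoherent hsub hSC ⟨Γ, rfl⟩]
    have hN : pivotSet sat neg rel = μ Set.univ :=
      (hM.pivotSet_subset hA0 hA2 hA3 hUC).antisymm hM.subset_pivotSet
    refine ⟨hM.cond0, hM.cond6, hM.cond7 hA3, hM.cond8, ?_, ?_⟩
    · exact cond11_iff.2 fun Γ => hN ▸ hM.cnsq_hClosure hA2 hA3 Γ
    · exact cond12_iff.2 (hN ▸ hUC)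
  · rintro ⟨-, h6, h7, h8, h11, h12⟩
    refine ⟨(· ∩ pivotSet sat neg rel), fun _ _ => Set.inter_subset_left,
      fun _ _ _ _ _ hx => ⟨hx.2, hx.1.2⟩,
      by simpa only [Set.univ_inter] using cond12_iff.1 h12, fun Γ α => ?_⟩
    rw [rel_iff_mem_cnsq_hClosure hA3 h6 h7 h8, cond11_iff.1 h11]
    rfl
end

section
/- Let A be an infinite set of propositional atoms, F_c the set of classical propositional formulas over A (built from atoms, the constants false and true, and the connectives ¬, ∨, ∧), 𝒱 the set of classical two-valued valuations on A (with classical satisfaction ⊨). For every subset W ⊆ 𝒱 with |W| ≤ |A|, Th(𝒱) = Th(𝒱 \ W). -/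
/-!
A formula only mentions finitely many atoms, so a valuation `v` refuting it can be changed freely
off those atoms without changing the truth value. Since `A` is infinite, this leaves `2 ^ |A|`
valuations that all refute the formula, and by Cantor's theorem they cannot all lie in `W`.
-/

/-- Classical propositional formulas over a set `A` of atoms, with constants
`false`, `true` and connectives `¬`, `∨`, `∧`. -/
inductive PropForm (A : Type u) : Type u
  | atom : A → PropForm A
  | fls : PropForm A
  | tru : PropForm A
  | neg : PropForm A → PropForm A
  | disj : PropForm A → PropForm A → PropForm A
  | conj : PropForm A → PropForm A → PropForm A

/-- Classical two-valued evaluation of a formula under a valuation `v : A → Bool`. -/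
def PropForm.eval {A : Type u} (v : A → Bool) : PropForm A → Bool
  | atom a => v a
  | fls => false
  | tru => true
  | neg φ => !(φ.eval v)
  | disj φ ψ => φ.eval v || ψ.eval v
  | conj φ ψ => φ.eval v && ψ.eval v

/-- Classical satisfaction: `v ⊨ α` iff `α` evaluates to `true` under `v`. -/
def satC {A : Type u} (v : A → Bool) (α : PropForm A) : Prop :=
  α.eval v = true

open Cardinal

section Theories

variable {F V : Type*} (sat : V → F → Prop)

theorem mem_thSet_iff {S : Set V} {α : F} : α ∈ thSet sat S ↔ ∀ v ∈ S, sat v α := by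
  simp [thSet, modSet, Set.subset_def]

theorem thSet_antitone {S T : Set V} (h : S ⊆ T) : thSet sat T ⊆ thSet sat S :=
  fun _ hα => h.trans hα

end Theories

namespace PropForm

variable {A : Type u}

def atoms : PropForm A → Set A
  | atom a => {a}
  | fls => ∅
  | tru => ∅
  | neg φ => φ.atoms
  | disj φ ψ => φ.atoms ∪ ψ.atoms
  | conj φ ψ => φ.atoms ∪ ψ.atoms

theorem atoms_finite (φ : PropForm A) : φ.atoms.Finite := by
  induction φ with
  | atom a => exact Set.finite_singleton a
  | fls | tru => exact Set.finite_empty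
  | neg φ ih => exact ih
  | disj φ ψ ih₁ ih₂ | conj φ ψ ih₁ ih₂ => exact ih₁.union ih₂

theorem eval_congr {φ : PropForm A} {v w : A → Bool} (h : Set.EqOn v w φ.atoms) :
    φ.eval v = φ.eval w := by
  induction φ with
  | atom a => exact h rfl
  | fls | tru => rfl
  | neg φ ih => simp only [eval, ih h]
  | disj φ ψ ih₁ ih₂ | conj φ ψ ih₁ ih₂ =>
      simp only [eval, ih₁ (h.mono Set.subset_union_left), ih₂ (h.mono Set.subset_union_right)]

end PropForm

section Valuations

variable {A : Type u} {β : Type v}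

theorem mk_compl_arrow_le_mk_eqOn (s : Set A) (v : A → β) :
    #(↥sᶜ → β) ≤ #{w : A → β | Set.EqOn w v s} := by
  classical
  refine mk_le_of_injective (f := fun g => ⟨fun a => if h : a ∈ s then v a else g ⟨a, h⟩,
    fun a ha => dif_pos ha⟩) fun g g' hgg' => funext fun a => ?_
  simpa [dif_neg a.2] using congrFun (congrArg Subtype.val hgg') a.1

theorem mk_lt_mk_eqOn_of_finite [Infinite A] {s : Set A} (hs : s.Finite) (v : A → Bool) :
    #A < #{w : A → Bool | Set.EqOn w v s} := by
  have hcompl : #↥sᶜ = #A := mk_compl_of_infinite s (hs.lt_aleph0.trans_le (aleph0_le_mk A))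
  calc #A < 2 ^ #A := cantor _
    _ = #(↥sᶜ → Bool) := by simp [hcompl]
    _ ≤ _ := mk_compl_arrow_le_mk_eqOn s v

theorem exists_notMem_eqOn_of_mk_le [Infinite A] {s : Set A} (hs : s.Finite) (v : A → Bool)
    {W : Set (A → Bool)} (hW : #W ≤ #A) : ∃ w ∉ W, Set.EqOn w v s := by
  by_contra! hsub
  exact (mk_lt_mk_eqOn_of_finite hs v).not_ge
    ((mk_le_mk_of_subset fun w hw => by_contra fun hwW => hsub w hwW hw).trans hW)

end Valuations

/-- In the classical propositional semantic structure over an infinite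
set of atoms `A`, for every set `W` of valuations with `|W| ≤ |A|`,
`Th(𝒱) = Th(𝒱 \ W)`. -/
theorem stmt16 (A : Type u) [Infinite A] (W : Set (A → Bool))
    (hW : Cardinal.mk W ≤ Cardinal.mk A) :
    thSet (satC (A := A)) Set.univ = thSet (satC (A := A)) (Set.univ \ W) := by
  refine (thSet_antitone _ Set.sdiff_subset).antisymm fun α hα => ?_
  rw [mem_thSet_iff] at hα ⊢
  intro v _
  obtain ⟨w, hwW, hwv⟩ := exists_notMem_eqOn_of_mk_le α.atoms_finite v hW
  have hw : satC w α := hα w ⟨trivial, hwW⟩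
  rwa [satC, PropForm.eval_congr hwv] at hw
end
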